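/- Let u ⊆ {1,…,s} be nonempty and k ∈ {0,1,…,m−1}^{|u|}. Then the gain coefficient satisfies Γ_{u,k} = Σ_{i=0}^{2^m−1} 1{C_{u,k}·i⃗ = 0} · ∏_{j∈u} N_{0,i,j}. -/

import Mathlib

/-!
The coordinate `x_{ij}` is the binary fraction whose digit vector is `C_j i⃗`, and
`⌊2^c x⌋ = ⌊2^c x'⌋` holds exactly when the first `c` digits of `x` and `x'` agree. Since
`i ↦ i XOR i'` is addition in `F₂^m`, `N_{i,i',j}` only depends on `C_j (i⃗ + i⃗')`, so
`N_{i, i XOR i', j} = N_{0,i',j}`. Reindexing the inner sum of `Γ_{u,k}` by `i' ↦ i XOR i'` makes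
it independent of `i`, which absorbs the factor `2^{-m}`. Finally, if `C_{u,k} i⃗ ≠ 0` then for
some `j ∈ u` one of the first `k_j` digits of `x_{ij}` differs from that of `x_{0j} = 0`, so
`N_{0,i,j} = 0` and the indicator changes nothing.
-/

open Finset

noncomputable section

/-- The bit vector `i⃗ ∈ F₂^m` of the integer `i = Σ_{ℓ=1}^m i_ℓ 2^{ℓ-1}`. -/
def bvec (m : ℕ) (i : ℕ) : Fin m → ZMod 2 :=
  fun ℓ => if Nat.testBit i ℓ.1 then 1 else 0

/-- The `(r+1)`-st row (i.e. `r` with 0-indexing) of an `m × m` matrix over `F₂`,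
as a vector in `F₂^m`; junk value `0` if `r ≥ m` (never used under the hypotheses below). -/
def rowAt (m : ℕ) (A : Matrix (Fin m) (Fin m) (ZMod 2)) (r : ℕ) : Fin m → ZMod 2 :=
  fun ℓ => if h : r < m then A ⟨r, h⟩ ℓ else 0

/-- The stacked matrix `C_{u,k}`: for each `j ∈ u`, the first `k j` rows of `C j`. -/
def stack {m s : ℕ} (C : Fin s → Matrix (Fin m) (Fin m) (ZMod 2))
    (u : Finset (Fin s)) (k : Fin s → ℕ) :
    Matrix ((j : {x // x ∈ u}) × Fin (k j.1)) (Fin m) (ZMod 2) :=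
  fun p => rowAt m (C p.1.1) p.2.1

/-- `∇C_{u,k}`: the matrix whose rows are the `(k j + 1)`-st rows (1-indexed) of `C j`, `j ∈ u`. -/
def grad {m s : ℕ} (C : Fin s → Matrix (Fin m) (Fin m) (ZMod 2))
    (u : Finset (Fin s)) (k : Fin s → ℕ) :
    Matrix {x // x ∈ u} (Fin m) (ZMod 2) :=
  fun j => rowAt m (C j.1) (k j.1)

/-- The coordinate `x_{ij} ∈ [0,1)` of the digital net generated by `C₁,…,C_s`:
`x_{ij} = Σ_{ℓ=1}^m y_ℓ 2^{-ℓ}` where `y = C_j · i⃗` over `F₂`. -/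
def pt {m s : ℕ} (C : Fin s → Matrix (Fin m) (Fin m) (ZMod 2)) (i : ℕ) (j : Fin s) : ℝ :=
  ∑ ℓ : Fin m, (((C j).mulVec (bvec m i) ℓ).val : ℝ) / 2 ^ (ℓ.1 + 1)

/-- The factor `N`: with `M(x,x') = max{k ∈ ℕ₀ : ⌊2^k x⌋ = ⌊2^k x'⌋}` (the number of matching
leading binary digits), `Nf x x' c` equals `1` if `M(x,x') > c` (equivalently the first `c+1`
binary digits match), `-1` if `M(x,x') = c` (the first `c` digits match but not `c+1`), and
`0` if `M(x,x') < c`. -/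
def Nf (x x' : ℝ) (c : ℕ) : ℤ :=
  if ⌊(2:ℝ) ^ (c + 1) * x⌋ = ⌊(2:ℝ) ^ (c + 1) * x'⌋ then 1
  else if ⌊(2:ℝ) ^ c * x⌋ = ⌊(2:ℝ) ^ c * x'⌋ then -1
  else 0

/-- The gain coefficient `Γ_{u,k} = 2^{-m} Σ_{i=0}^{2^m-1} Σ_{i'=0}^{2^m-1} ∏_{j∈u} N_{i,i',j}`. -/
def Gam {m s : ℕ} (C : Fin s → Matrix (Fin m) (Fin m) (ZMod 2))
    (u : Finset (Fin s)) (k : Fin s → ℕ) : ℚ :=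
  (2 ^ m : ℚ)⁻¹ * ∑ i ∈ Finset.range (2 ^ m), ∑ i' ∈ Finset.range (2 ^ m),
      ∏ j ∈ u, (Nf (pt C i j) (pt C i' j) (k j) : ℚ)

lemma mul_add_eq_mul_add_iff {P a b x y : ℤ} (hx₀ : 0 ≤ x) (hx : x < P) (hy₀ : 0 ≤ y)
    (hy : y < P) : P * a + x = P * b + y ↔ a = b ∧ x = y := by
  refine ⟨fun h => ?_, fun ⟨hab, hxy⟩ => by rw [hab, hxy]⟩
  have hab : a = b := by
    rcases lt_trichotomy a b with hlt | heq | hgt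
    · nlinarith
    · exact heq
    · nlinarith
  subst hab
  exact ⟨rfl, by linarith⟩

def fracOfDigits {m : ℕ} (v : Fin m → ZMod 2) : ℝ :=
  ∑ ℓ : Fin m, ((v ℓ).val : ℝ) / 2 ^ (ℓ.1 + 1)

lemma pt_eq_fracOfDigits {m s : ℕ} (C : Fin s → Matrix (Fin m) (Fin m) (ZMod 2)) (i : ℕ)
    (j : Fin s) : pt C i j = fracOfDigits ((C j).mulVec (bvec m i)) := rfl

lemma fracOfDigits_succ {m : ℕ} (v : Fin (m + 1) → ZMod 2) :
    fracOfDigits v = ((v 0).val + fracOfDigits (Fin.tail v)) / 2 := by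
  simp only [fracOfDigits, Fin.sum_univ_succ, Fin.val_zero, Fin.val_succ, Fin.tail, add_div,
    Finset.sum_div, div_div, pow_succ]
  norm_num

lemma fracOfDigits_nonneg {m : ℕ} (v : Fin m → ZMod 2) : 0 ≤ fracOfDigits v := by
  unfold fracOfDigits; positivity

lemma fracOfDigits_lt_one {m : ℕ} (v : Fin m → ZMod 2) : fracOfDigits v < 1 := by
  induction m with
  | zero => simp [fracOfDigits]
  | succ m ih =>
    have hv : ((v 0).val : ℝ) ≤ 1 := by exact_mod_cast Nat.le_of_lt_succ (v 0).val_lt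
    rw [fracOfDigits_succ]
    linarith [ih (Fin.tail v)]

lemma floor_two_pow_mul_fracOfDigits_nonneg {m : ℕ} (v : Fin m → ZMod 2) (c : ℕ) :
    0 ≤ ⌊(2 : ℝ) ^ c * fracOfDigits v⌋ :=
  Int.floor_nonneg.mpr (mul_nonneg (by positivity) (fracOfDigits_nonneg v))

lemma floor_two_pow_mul_fracOfDigits_lt {m : ℕ} (v : Fin m → ZMod 2) (c : ℕ) :
    ⌊(2 : ℝ) ^ c * fracOfDigits v⌋ < 2 ^ c := by
  rw [Int.floor_lt]
  push_cast
  exact mul_lt_of_lt_one_right (by positivity) (fracOfDigits_lt_one v)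

theorem floor_two_pow_mul_fracOfDigits_eq_iff {m : ℕ} (c : ℕ) (v w : Fin m → ZMod 2) :
    ⌊(2 : ℝ) ^ c * fracOfDigits v⌋ = ⌊(2 : ℝ) ^ c * fracOfDigits w⌋ ↔
      ∀ ℓ : Fin m, ℓ.1 < c → v ℓ = w ℓ := by
  induction m generalizing c with
  | zero => simp [fracOfDigits]
  | succ m ih =>
    cases c with
    | zero =>
      simp [Int.floor_eq_zero_iff.mpr ⟨fracOfDigits_nonneg _, fracOfDigits_lt_one _⟩]
    | succ c =>
      have hfloor (v : Fin (m + 1) → ZMod 2) : ⌊(2 : ℝ) ^ (c + 1) * fracOfDigits v⌋ =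
          2 ^ c * ((v 0).val : ℤ) + ⌊(2 : ℝ) ^ c * fracOfDigits (Fin.tail v)⌋ := by
        have hsplit : (2 : ℝ) ^ (c + 1) * fracOfDigits v =
            ((2 ^ c * (v 0).val : ℕ) : ℝ) + 2 ^ c * fracOfDigits (Fin.tail v) := by
          rw [fracOfDigits_succ]; push_cast; ring
        rw [hsplit, Int.floor_natCast_add]
        push_cast; rfl
      rw [hfloor, hfloor,
        mul_add_eq_mul_add_iff (floor_two_pow_mul_fracOfDigits_nonneg _ c)
          (floor_two_pow_mul_fracOfDigits_lt _ c) (floor_two_pow_mul_fracOfDigits_nonneg _ c)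
          (floor_two_pow_mul_fracOfDigits_lt _ c),
        Nat.cast_inj, (ZMod.val_injective 2).eq_iff, ih, Fin.forall_fin_succ]
      simp [Fin.tail]

lemma Nf_fracOfDigits_add_right {m : ℕ} (v w : Fin m → ZMod 2) (c : ℕ) :
    Nf (fracOfDigits v) (fracOfDigits (v + w)) c =
      Nf (fracOfDigits (0 : Fin m → ZMod 2)) (fracOfDigits w) c := by
  simp only [Nf, floor_two_pow_mul_fracOfDigits_eq_iff, Pi.add_apply, Pi.zero_apply, left_eq_add,
    eq_comm]

lemma eq_of_Nf_fracOfDigits_ne_zero {m : ℕ} {v w : Fin m → ZMod 2} {c : ℕ}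
    (h : Nf (fracOfDigits v) (fracOfDigits w) c ≠ 0) (ℓ : Fin m) (hℓ : ℓ.1 < c) :
    v ℓ = w ℓ := by
  unfold Nf at h
  split_ifs at h with hc₁ hc
  · exact (floor_two_pow_mul_fracOfDigits_eq_iff _ v w).mp hc₁ ℓ (by omega)
  · exact (floor_two_pow_mul_fracOfDigits_eq_iff _ v w).mp hc ℓ hℓ
  · exact absurd rfl h

lemma bvec_zero (m : ℕ) : bvec m 0 = 0 := by
  funext ℓ; simp [bvec]

lemma bvec_xor (m i i' : ℕ) : bvec m (i ^^^ i') = bvec m i + bvec m i' := by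
  funext ℓ
  simp only [bvec, Nat.testBit_xor, Pi.add_apply]
  cases Nat.testBit i ℓ.1 <;> cases Nat.testBit i' ℓ.1 <;> decide

section DigitalNet

variable {m s : ℕ} (C : Fin s → Matrix (Fin m) (Fin m) (ZMod 2)) (u : Finset (Fin s))
  (k : Fin s → ℕ)

lemma Nf_pt_xor (j : Fin s) (i i' c : ℕ) :
    Nf (pt C i j) (pt C (i ^^^ i') j) c = Nf (pt C 0 j) (pt C i' j) c := by
  simp only [pt_eq_fracOfDigits, bvec_xor, Matrix.mulVec_add, Nf_fracOfDigits_add_right,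
    bvec_zero, Matrix.mulVec_zero]

lemma sum_prod_Nf_pt_eq {i : ℕ} (hi : i < 2 ^ m) :
    ∑ i' ∈ range (2 ^ m), ∏ j ∈ u, (Nf (pt C i j) (pt C i' j) (k j) : ℚ) =
      ∑ i' ∈ range (2 ^ m), ∏ j ∈ u, (Nf (pt C 0 j) (pt C i' j) (k j) : ℚ) := by
  symm
  refine sum_nbij' (i ^^^ ·) (i ^^^ ·) ?_ ?_ ?_ ?_ ?_
  · exact fun a ha => mem_range.mpr (Nat.xor_lt_two_pow hi (mem_range.mp ha))
  · exact fun a ha => mem_range.mpr (Nat.xor_lt_two_pow hi (mem_range.mp ha))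
  · exact fun a _ => Nat.xor_xor_cancel_left i a
  · exact fun a _ => Nat.xor_xor_cancel_left i a
  · exact fun a _ => prod_congr rfl fun j _ => by rw [Nf_pt_xor]

lemma stack_mulVec_apply (y : Fin m → ZMod 2) (j : {x // x ∈ u}) (r : Fin (k j.1)) :
    (stack C u k).mulVec y ⟨j, r⟩ = if h : r.1 < m then (C j.1).mulVec y ⟨r.1, h⟩ else 0 := by
  simp only [Matrix.mulVec, stack, rowAt]
  split_ifs <;> simp [dotProduct]

lemma stack_mulVec_bvec_eq_zero {i : ℕ}
    (h : ∏ j ∈ u, (Nf (pt C 0 j) (pt C i j) (k j) : ℚ) ≠ 0) :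
    (stack C u k).mulVec (bvec m i) = 0 := by
  funext ⟨⟨j, hj⟩, r⟩
  have hNf : Nf (pt C 0 j) (pt C i j) (k j) ≠ 0 := by exact_mod_cast prod_ne_zero_iff.mp h j hj
  rw [stack_mulVec_apply]
  split_ifs with hr
  · have hdigit := eq_of_Nf_fracOfDigits_ne_zero hNf ⟨r.1, hr⟩ r.2
    rw [bvec_zero, Matrix.mulVec_zero] at hdigit
    exact hdigit.symm
  · rfl

end DigitalNet

theorem statement_general (m s : ℕ)
    (C : Fin s → Matrix (Fin m) (Fin m) (ZMod 2))
    (u : Finset (Fin s))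
    (k : Fin s → ℕ) :
    Gam C u k =
      ∑ i ∈ Finset.range (2 ^ m),
        (if (stack C u k).mulVec (bvec m i) = 0 then (1 : ℚ) else 0) *
          ∏ j ∈ u, (Nf (pt C 0 j) (pt C i j) (k j) : ℚ) := by
  have hindicator (i : ℕ) :
      (if (stack C u k).mulVec (bvec m i) = 0 then (1 : ℚ) else 0) *
        ∏ j ∈ u, (Nf (pt C 0 j) (pt C i j) (k j) : ℚ) =
      ∏ j ∈ u, (Nf (pt C 0 j) (pt C i j) (k j) : ℚ) := by
    split_ifs with h
    · exact one_mul _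
    · rw [zero_mul, eq_comm]
      by_contra hprod
      exact h (stack_mulVec_bvec_eq_zero C u k hprod)
  rw [Gam, sum_congr rfl fun i hi => sum_prod_Nf_pt_eq C u k (mem_range.mp hi), sum_const,
    card_range, nsmul_eq_mul, Nat.cast_pow, Nat.cast_ofNat,
    inv_mul_cancel_left₀ (by positivity)]
  exact (sum_congr rfl fun i _ => hindicator i).symm

theorem statement (m s : ℕ) (hm : 1 ≤ m) (hs : 1 ≤ s)
    (C : Fin s → Matrix (Fin m) (Fin m) (ZMod 2))
    (u : Finset (Fin s)) (hu : u.Nonempty)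
    (k : Fin s → ℕ) (hk : ∀ j ∈ u, k j ≤ m - 1) :
    Gam C u k =
      ∑ i ∈ Finset.range (2 ^ m),
        (if (stack C u k).mulVec (bvec m i) = 0 then (1 : ℚ) else 0) *
          ∏ j ∈ u, (Nf (pt C 0 j) (pt C i j) (k j) : ℚ) :=
  statement_general m s C u k

end
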